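/- Let R be a commutative ring, c,d ∈ ℤ, and let A be a ℤ-graded R-module with (c,d)-graded Frobenius data (μ,η,ν,ε) satisfying the signed relations (i)–(v). Define μ' := (−1)^{c(c+1)/2} μ and ν' := (−1)^{d(d+1)/2} ν. Then (A,μ',η,ν',ε) satisfies: graded associativity μ'∘(μ'⊗id)=(−1)^c μ'∘(id⊗μ'); the unitality relations μ'∘(η⊗id) = id_A = (−1)^c μ'∘(id⊗η); graded coassociativity (id⊗ν')∘ν'=(−1)^d (ν'⊗id)∘ν'; the counitality relations (id⊗ε)∘ν' = id_A = (−1)^d (ε⊗id)∘ν'; and the graded Frobenius relation (μ'⊗id)∘(id⊗ν')=(−1)^{cd} ν'∘μ'=(id⊗μ')∘(ν'⊗id). -/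

import Mathlib

/-! # A framework for ℤ-graded modules with Koszul sign conventions -/

noncomputable section
open scoped TensorProduct DirectSum

/-- The sign `(−1)^z` for an integer `z` (depends only on the parity of `z`),
as an element of the ring `R`. -/
def gsign (R : Type) [CommRing R] (z : ℤ) : R := (-1 : R) ^ z.natAbs

/-- A ℤ-graded `R`-module: a family of `R`-modules indexed by `ℤ`. -/
structure GradedModule (R : Type) [CommRing R] where
  piece : ℤ → Type
  [acg : ∀ i, AddCommGroup (piece i)]
  [mod : ∀ i, Module R (piece i)]

attribute [instance 2000] GradedModule.acg GradedModule.mod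

variable {R : Type} [CommRing R]

/-- Transport along an equality of degrees. -/
def GradedModule.pcast (A : GradedModule R) {i j : ℤ} (h : i = j) :
    A.piece i →ₗ[R] A.piece j where
  toFun a := h ▸ a
  map_add' a b := by subst h; rfl
  map_smul' r a := by subst h; rfl

/-- The tensor product of graded modules: `(A ⊗ B)_k = ⊕_{p+q=k} A_p ⊗ B_q`. -/
def GradedModule.tensor (A B : GradedModule R) : GradedModule R where
  piece k := ⨁ p : ℤ, (A.piece p ⊗[R] B.piece (k - p))

/-- The unit object: `R` concentrated in degree `0`. -/
def gUnit (R : Type) [CommRing R] : GradedModule R where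
  piece k := ↥(if k = 0 then (⊤ : Submodule R R) else ⊥)

/-- A graded map of degree `deg`: a family of `R`-linear maps `A_i → B_{i+deg}`. -/
structure GMap (A B : GradedModule R) where
  deg : ℤ
  app : ∀ i, A.piece i →ₗ[R] B.piece (i + deg)

namespace GMap

/-- The identity graded map (degree `0`). -/
protected def id (A : GradedModule R) : GMap A A :=
  ⟨0, fun i => A.pcast (by ring)⟩

/-- Composition of graded maps (maps act from the left; `g.comp f = g ∘ f`). -/
def comp {A B C : GradedModule R} (g : GMap B C) (f : GMap A B) : GMap A C :=
  ⟨f.deg + g.deg, fun i =>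
    (C.pcast (by ring)).comp ((g.app (i + f.deg)).comp (f.app i))⟩

/-- Scalar multiplication of a graded map. -/
instance {A B : GradedModule R} : SMul R (GMap A B) :=
  ⟨fun r f => ⟨f.deg, fun i => r • f.app i⟩⟩

/-- Re-present a graded map with an equal degree expression. -/
def reindex {A B : GradedModule R} (f : GMap A B) (n : ℤ) (h : f.deg = n) : GMap A B :=
  ⟨n, fun i => (B.pcast (by rw [h])).comp (f.app i)⟩

/-- The Koszul-signed tensor product of graded maps:
`(f ⊗ g)(a ⊗ b) = (−1)^{|g|·|a|} f(a) ⊗ g(b)`. -/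
def tmul {A A' B B' : GradedModule R} (f : GMap A A') (g : GMap B B') :
    GMap (A.tensor B) (A'.tensor B') :=
  ⟨f.deg + g.deg, fun k =>
    DirectSum.toModule R ℤ _ fun p =>
      (DirectSum.lof R ℤ
          (fun q => A'.piece q ⊗[R] B'.piece (k + (f.deg + g.deg) - q)) (p + f.deg)).comp
        (gsign R (g.deg * p) •
          (TensorProduct.map (f.app p)
            ((B'.pcast (show (k - p) + g.deg = k + (f.deg + g.deg) - (p + f.deg) by ring)).comp
              (g.app (k - p)))))⟩

end GMap

/-- The Koszul twist `τ : A ⊗ B → B ⊗ A`, `τ(a ⊗ b) = (−1)^{|a||b|} b ⊗ a`. -/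
def twistG (A B : GradedModule R) : GMap (A.tensor B) (B.tensor A) :=
  ⟨0, fun k =>
    DirectSum.toModule R ℤ _ fun p =>
      (DirectSum.lof R ℤ (fun q => B.piece q ⊗[R] A.piece (k + 0 - q)) (k - p)).comp
        (gsign R (p * (k - p)) •
          ((LinearMap.lTensor (B.piece (k - p)) (A.pcast (show p = k + 0 - (k - p) by ring))).comp
            (TensorProduct.comm R (A.piece p) (B.piece (k - p))).toLinearMap))⟩

/-- The associator `(A ⊗ B) ⊗ C → A ⊗ (B ⊗ C)` (no signs). -/
def assocG (A B C : GradedModule R) :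
    GMap ((A.tensor B).tensor C) (A.tensor (B.tensor C)) :=
  ⟨0, fun k =>
    DirectSum.toModule R ℤ _ fun p =>
      (DirectSum.toModule R ℤ _ fun q =>
        (DirectSum.lof R ℤ (fun q' => A.piece q' ⊗[R] (B.tensor C).piece (k + 0 - q')) q).comp
          ((LinearMap.lTensor (A.piece q)
            ((DirectSum.lof R ℤ (fun s => B.piece s ⊗[R] C.piece ((k + 0 - q) - s)) (p - q)).comp
              (LinearMap.lTensor (B.piece (p - q))
                (C.pcast (show k - p = (k + 0 - q) - (p - q) by ring))))).comp
            (TensorProduct.assoc R (A.piece q) (B.piece (p - q)) (C.piece (k - p))).toLinearMap)).comp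
        (TensorProduct.directSumLeft R R (fun q => A.piece q ⊗[R] B.piece (p - q))
          (C.piece (k - p))).toLinearMap⟩

/-- The inverse associator `A ⊗ (B ⊗ C) → (A ⊗ B) ⊗ C` (no signs). -/
def assocInvG (A B C : GradedModule R) :
    GMap (A.tensor (B.tensor C)) ((A.tensor B).tensor C) :=
  ⟨0, fun k =>
    DirectSum.toModule R ℤ _ fun p =>
      (DirectSum.toModule R ℤ _ fun s =>
        (DirectSum.lof R ℤ
            (fun q' => (A.tensor B).piece q' ⊗[R] C.piece (k + 0 - q')) (p + s)).comp
          ((TensorProduct.map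
              ((DirectSum.lof R ℤ (fun q => A.piece q ⊗[R] B.piece ((p + s) - q)) p).comp
                (LinearMap.lTensor (A.piece p) (B.pcast (show s = (p + s) - p by ring))))
              (C.pcast (show (k - p) - s = k + 0 - (p + s) by ring))).comp
            (TensorProduct.assoc R (A.piece p) (B.piece s)
              (C.piece ((k - p) - s))).symm.toLinearMap)).comp
        (TensorProduct.directSumRight R R (A.piece p)
          (fun s => B.piece s ⊗[R] C.piece ((k - p) - s))).toLinearMap⟩

/-- The left unitor `𝟙 ⊗ A → A`. -/
def lunitor (A : GradedModule R) : GMap ((gUnit R).tensor A) A :=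
  ⟨0, fun k =>
    DirectSum.toModule R ℤ _ fun p =>
      if h : p = 0 then
        TensorProduct.lift
          ((LinearMap.toSpanSingleton R (A.piece (k - p) →ₗ[R] A.piece (k + 0))
              (A.pcast (by omega))).comp
            (Submodule.subtype (if p = 0 then (⊤ : Submodule R R) else ⊥)))
      else 0⟩

/-- The right unitor `A ⊗ 𝟙 → A`. -/
def runitor (A : GradedModule R) : GMap (A.tensor (gUnit R)) A :=
  ⟨0, fun k =>
    DirectSum.toModule R ℤ _ fun p =>
      if h : k - p = 0 then
        TensorProduct.lift
          (((LinearMap.toSpanSingleton R (A.piece p →ₗ[R] A.piece (k + 0))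
              (A.pcast (by omega))).comp
            (Submodule.subtype (if k - p = 0 then (⊤ : Submodule R R) else ⊥))).flip)
      else 0⟩

/-- The inverse left unitor `A → 𝟙 ⊗ A`. -/
def lunitorInv (A : GradedModule R) : GMap A ((gUnit R).tensor A) :=
  ⟨0, fun k =>
    (DirectSum.lof R ℤ (fun p => (gUnit R).piece p ⊗[R] A.piece (k + 0 - p)) 0).comp
      (((TensorProduct.mk R ((gUnit R).piece 0) (A.piece (k + 0 - 0))) ⟨1, by simp⟩).comp
        (A.pcast (by ring)))⟩

/-- The inverse right unitor `A → A ⊗ 𝟙`. -/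
def runitorInv (A : GradedModule R) : GMap A (A.tensor (gUnit R)) :=
  ⟨0, fun k =>
    (DirectSum.lof R ℤ (fun p => A.piece p ⊗[R] (gUnit R).piece (k + 0 - p)) k).comp
      ((TensorProduct.mk R (A.piece k) ((gUnit R).piece (k + 0 - k))).flip
        ⟨1, by simp⟩)⟩


/-- The underlying element of `R` of an element of a piece of the unit object. -/
def unitVal {R : Type} [CommRing R] (k : ℤ) : (gUnit R).piece k →ₗ[R] R :=
  Submodule.subtype _
section FrobeniusRelations

variable {R : Type} [CommRing R]

/-- (i) graded associativity: `μ∘(μ⊗id) = (−1)^c μ∘(id⊗μ)` (under the associator). -/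
def relAssoc (c : ℤ) {A : GradedModule R} (μ : GMap (A.tensor A) A) : Prop :=
  μ.comp (μ.tmul (GMap.id A)) =
    gsign R c • ((μ.comp ((GMap.id A).tmul μ)).comp (assocG A A A))

/-- (ii) graded unitality: `(−1)^c μ∘(η⊗id) = (−1)^{c(c−1)/2} id = μ∘(id⊗η)`
(under the unitors). -/
def relUnit (c : ℤ) {A : GradedModule R} (μ : GMap (A.tensor A) A)
    (η : GMap (gUnit R) A) : Prop :=
  gsign R c • ((μ.comp (η.tmul (GMap.id A))).comp (lunitorInv A)) =
      gsign R (c * (c - 1) / 2) • GMap.id A ∧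
  (μ.comp ((GMap.id A).tmul η)).comp (runitorInv A) =
      gsign R (c * (c - 1) / 2) • GMap.id A

/-- (iii) graded coassociativity: `(id⊗ν)∘ν = (−1)^d (ν⊗id)∘ν` (under the associator). -/
def relCoassoc (d : ℤ) {A : GradedModule R} (ν : GMap A (A.tensor A)) : Prop :=
  ((GMap.id A).tmul ν).comp ν =
    gsign R d • ((assocG A A A).comp ((ν.tmul (GMap.id A)).comp ν))

/-- (iv) graded counitality: `(−1)^d (id⊗ε)∘ν = (−1)^{d(d−1)/2} id = (ε⊗id)∘ν`
(under the unitors). -/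
def relCounit (d : ℤ) {A : GradedModule R} (ν : GMap A (A.tensor A))
    (ε : GMap A (gUnit R)) : Prop :=
  gsign R d • ((runitor A).comp (((GMap.id A).tmul ε).comp ν)) =
      gsign R (d * (d - 1) / 2) • GMap.id A ∧
  (lunitor A).comp ((ε.tmul (GMap.id A)).comp ν) =
      gsign R (d * (d - 1) / 2) • GMap.id A

/-- (v) graded Frobenius relation:
`(μ⊗id)∘(id⊗ν) = (−1)^{cd} ν∘μ = (id⊗μ)∘(ν⊗id)` (under the associators). -/
def relFrob (c d : ℤ) {A : GradedModule R} (μ : GMap (A.tensor A) A)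
    (ν : GMap A (A.tensor A)) : Prop :=
  (μ.tmul (GMap.id A)).comp ((assocInvG A A A).comp ((GMap.id A).tmul ν)) =
      gsign R (c * d) • (ν.comp μ) ∧
  ((GMap.id A).tmul μ).comp ((assocG A A A).comp (ν.tmul (GMap.id A))) =
      gsign R (c * d) • (ν.comp μ)

/-- (vi) graded commutativity: `μ∘τ = (−1)^c μ`. -/
def relComm (c : ℤ) {A : GradedModule R} (μ : GMap (A.tensor A) A) : Prop :=
  μ.comp (twistG A A) = gsign R c • μ

/-- (vi') graded symmetry: `ε∘μ∘τ = (−1)^c ε∘μ`. -/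
def relSymm (c : ℤ) {A : GradedModule R} (μ : GMap (A.tensor A) A)
    (ε : GMap A (gUnit R)) : Prop :=
  (ε.comp μ).comp (twistG A A) = gsign R c • (ε.comp μ)

/-- Unsigned unitality `μ∘(η⊗id) = id = μ∘(id⊗η)` (under the unitors). -/
def relUnit₀ {A : GradedModule R} (μ : GMap (A.tensor A) A)
    (η : GMap (gUnit R) A) : Prop :=
  (μ.comp (η.tmul (GMap.id A))).comp (lunitorInv A) = GMap.id A ∧
  (μ.comp ((GMap.id A).tmul η)).comp (runitorInv A) = GMap.id A

/-- Unsigned counitality `(id⊗ε)∘ν = id = (ε⊗id)∘ν` (under the unitors). -/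
def relCounit₀ {A : GradedModule R} (ν : GMap A (A.tensor A))
    (ε : GMap A (gUnit R)) : Prop :=
  (runitor A).comp (((GMap.id A).tmul ε).comp ν) = GMap.id A ∧
  (lunitor A).comp ((ε.tmul (GMap.id A)).comp ν) = GMap.id A

/-- Unsigned Frobenius relation `(μ⊗id)∘(id⊗ν) = ν∘μ = (id⊗μ)∘(ν⊗id)`
(under the associators). -/
def relFrob₀ {A : GradedModule R} (μ : GMap (A.tensor A) A)
    (ν : GMap A (A.tensor A)) : Prop :=
  (μ.tmul (GMap.id A)).comp ((assocInvG A A A).comp ((GMap.id A).tmul ν)) = ν.comp μ ∧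
  ((GMap.id A).tmul μ).comp ((assocG A A A).comp (ν.tmul (GMap.id A))) = ν.comp μ

/-- The zig-zag (duality) identities for a pairing `p : A⊗A → 𝟙` and a
copairing `q : 𝟙 → A⊗A`:
`(p⊗id)∘(id⊗q) = id = (id⊗p)∘(q⊗id)` (under the associators and unitors). -/
def relZigZag {A : GradedModule R} (p : GMap (A.tensor A) (gUnit R))
    (q : GMap (gUnit R) (A.tensor A)) : Prop :=
  (lunitor A).comp ((p.tmul (GMap.id A)).comp ((assocInvG A A A).comp
      (((GMap.id A).tmul q).comp (runitorInv A)))) = GMap.id A ∧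
  (runitor A).comp (((GMap.id A).tmul p).comp ((assocG A A A).comp
      ((q.tmul (GMap.id A)).comp (lunitorInv A)))) = GMap.id A

end FrobeniusRelations

/-! Rescaling a graded map by a scalar commutes with composition and with the Koszul tensor
product of maps, since the Koszul sign only sees degrees and rescaling preserves them. Both sides
of associativity (resp. coassociativity, the Frobenius relation) are quadratic in `μ` (resp.
quadratic in `ν`, bilinear in `μ` and `ν`), so these relations survive any rescaling. In the unit
and counit relations the new sign is absorbed using `c(c+1)/2 = c(c-1)/2 + c` and `(±1)² = 1`. -/

namespace GMap

variable {R : Type} [CommRing R] {A B C A' B' : GradedModule R}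

instance : MulAction R (GMap A B) where
  one_smul f := congrArg (GMap.mk f.deg) (funext fun i => one_smul R (f.app i))
  mul_smul r s f := congrArg (GMap.mk f.deg) (funext fun i => mul_smul r s (f.app i))

lemma smul_comp (r : R) (g : GMap B C) (f : GMap A B) : (r • g).comp f = r • g.comp f :=
  congrArg (GMap.mk _) (funext fun _ => LinearMap.ext fun _ => map_smul (C.pcast _) r _)

lemma comp_smul (r : R) (g : GMap B C) (f : GMap A B) : g.comp (r • f) = r • g.comp f :=
  congrArg (GMap.mk _) (funext fun _ => LinearMap.ext fun _ =>
    (congrArg (C.pcast _) (map_smul (g.app _) r _)).trans (map_smul (C.pcast _) r _))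

-- `erw`: the pieces of `A.tensor B` are direct sums only up to unfolding `GradedModule.tensor`.
lemma tmul_app_lof (f : GMap A A') (g : GMap B B') (k p : ℤ) (x : A.piece p)
    (y : B.piece (k - p)) :
    (f.tmul g).app k
        (DirectSum.lof R ℤ (fun i => A.piece i ⊗[R] B.piece (k - i)) p (x ⊗ₜ y)) =
      gsign R (g.deg * p) •
        DirectSum.lof R ℤ (fun q => A'.piece q ⊗[R] B'.piece (k + (f.deg + g.deg) - q))
          (p + f.deg) (f.app p x ⊗ₜ B'.pcast (by ring) (g.app (k - p) y)) := by
  erw [DirectSum.toModule_lof, LinearMap.comp_apply, LinearMap.smul_apply, map_smul]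
  rfl

lemma tensor_hom_ext {M : Type*} [AddCommMonoid M] [Module R M] {k : ℤ}
    {φ ψ : (A.tensor B).piece k →ₗ[R] M}
    (h : ∀ p (x : A.piece p) (y : B.piece (k - p)),
      φ (DirectSum.lof R ℤ (fun i => A.piece i ⊗[R] B.piece (k - i)) p (x ⊗ₜ y)) =
        ψ (DirectSum.lof R ℤ (fun i => A.piece i ⊗[R] B.piece (k - i)) p (x ⊗ₜ y))) :
    φ = ψ :=
  DirectSum.linearMap_ext _ fun p => TensorProduct.ext' (h p)

lemma smul_tmul (r : R) (f : GMap A A') (g : GMap B B') : (r • f).tmul g = r • f.tmul g := by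
  refine congrArg (GMap.mk _) (funext fun k => tensor_hom_ext fun p x y => ?_)
  erw [tmul_app_lof, LinearMap.smul_apply, LinearMap.smul_apply, tmul_app_lof,
    ← TensorProduct.smul_tmul', map_smul, smul_comm]
  rfl

lemma tmul_smul (r : R) (f : GMap A A') (g : GMap B B') : f.tmul (r • g) = r • f.tmul g := by
  refine congrArg (GMap.mk _) (funext fun k => tensor_hom_ext fun p x y => ?_)
  erw [tmul_app_lof, LinearMap.smul_apply, LinearMap.smul_apply, tmul_app_lof, map_smul,
    TensorProduct.tmul_smul, map_smul, smul_comm]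
  rfl

end GMap

section Sign

variable {R : Type} [CommRing R]

lemma gsign_add (a b : ℤ) : gsign R (a + b) = gsign R a * gsign R b := by
  rw [gsign, gsign, gsign, ← pow_add, neg_one_pow_eq_pow_mod_two,
    neg_one_pow_eq_pow_mod_two (n := a.natAbs + b.natAbs)]
  congr 1
  omega

lemma gsign_mul_self (z : ℤ) : gsign R z * gsign R z = 1 := by
  rw [gsign, ← mul_pow, neg_one_mul, neg_neg, one_pow]

lemma gsign_mul_succ_div_two (c : ℤ) :
    gsign R (c * (c + 1) / 2) = gsign R (c * (c - 1) / 2) * gsign R c := by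
  rw [← gsign_add, show c * (c + 1) = c * (c - 1) + c * 2 by ring,
    Int.add_mul_ediv_right _ _ two_ne_zero]

end Sign

section Relations

variable {R : Type} [CommRing R] {A : GradedModule R} {c d : ℤ}
  {μ : GMap (A.tensor A) A} {η : GMap (gUnit R) A} {ν : GMap A (A.tensor A)}
  {ε : GMap A (gUnit R)}

open GMap

lemma relAssoc.smul (h : relAssoc c μ) (r : R) : relAssoc c (r • μ) := by
  unfold relAssoc at h ⊢
  simp only [smul_tmul, tmul_smul, smul_comp, comp_smul, h, smul_smul]
  congr 1
  ring

lemma relCoassoc.smul (h : relCoassoc d ν) (r : R) : relCoassoc d (r • ν) := by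
  unfold relCoassoc at h ⊢
  simp only [smul_tmul, tmul_smul, smul_comp, comp_smul, h, smul_smul]
  congr 1
  ring

lemma relFrob.smul (h : relFrob c d μ ν) (r s : R) : relFrob c d (r • μ) (s • ν) := by
  obtain ⟨hl, hr⟩ := h
  constructor <;>
  · simp only [smul_tmul, tmul_smul, smul_comp, comp_smul, hl, hr, smul_smul]
    congr 1
    ring

lemma smul_smul_eq_of_smul_eq {M X : Type*} [Monoid M] [MulAction M X] {a b : M} {x y : X}
    (hb : b * b = 1) (h : a • x = b • y) : (b * a) • x = y := by
  rw [mul_smul, h, smul_smul, hb, one_smul]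

lemma relUnit.left_rescaled (h : relUnit c μ η) :
    ((gsign R (c * (c + 1) / 2) • μ).comp (η.tmul (GMap.id A))).comp (lunitorInv A) =
      GMap.id A := by
  rw [smul_comp, smul_comp, gsign_mul_succ_div_two]
  exact smul_smul_eq_of_smul_eq (gsign_mul_self _) h.1

lemma relUnit.right_rescaled (h : relUnit c μ η) :
    gsign R c • (((gsign R (c * (c + 1) / 2) • μ).comp
      ((GMap.id A).tmul η)).comp (runitorInv A)) = GMap.id A := by
  rw [smul_comp, smul_comp, smul_smul, gsign_mul_succ_div_two, mul_left_comm, gsign_mul_self,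
    mul_one, h.2, smul_smul, gsign_mul_self, one_smul]

lemma relCounit.right_rescaled (h : relCounit d ν ε) :
    (runitor A).comp (((GMap.id A).tmul ε).comp (gsign R (d * (d + 1) / 2) • ν)) =
      GMap.id A := by
  rw [comp_smul, comp_smul, gsign_mul_succ_div_two]
  exact smul_smul_eq_of_smul_eq (gsign_mul_self _) h.1

lemma relCounit.left_rescaled (h : relCounit d ν ε) :
    gsign R d • ((lunitor A).comp
      ((ε.tmul (GMap.id A)).comp (gsign R (d * (d + 1) / 2) • ν))) = GMap.id A := by
  rw [comp_smul, comp_smul, smul_smul, gsign_mul_succ_div_two, mul_left_comm, gsign_mul_self,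
    mul_one, h.2, smul_smul, gsign_mul_self, one_smul]

end Relations

theorem graded_frobenius_sign_change_general
    (R : Type) [CommRing R] (c d : ℤ) (A : GradedModule R)
    (μ : GMap (A.tensor A) A) (η : GMap (gUnit R) A)
    (ν : GMap A (A.tensor A)) (ε : GMap A (gUnit R))
    (h₁ : relAssoc c μ) (h₂ : relUnit c μ η) (h₃ : relCoassoc d ν)
    (h₄ : relCounit d ν ε) (h₅ : relFrob c d μ ν) :
    relAssoc c (gsign R (c * (c + 1) / 2) • μ) ∧
    (((gsign R (c * (c + 1) / 2) • μ).comp (η.tmul (GMap.id A))).comp (lunitorInv A) =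
        GMap.id A ∧
      gsign R c • (((gsign R (c * (c + 1) / 2) • μ).comp
          ((GMap.id A).tmul η)).comp (runitorInv A)) = GMap.id A) ∧
    relCoassoc d (gsign R (d * (d + 1) / 2) • ν) ∧
    ((runitor A).comp (((GMap.id A).tmul ε).comp (gsign R (d * (d + 1) / 2) • ν)) =
        GMap.id A ∧
      gsign R d • ((lunitor A).comp
          ((ε.tmul (GMap.id A)).comp (gsign R (d * (d + 1) / 2) • ν))) = GMap.id A) ∧
    relFrob c d (gsign R (c * (c + 1) / 2) • μ) (gsign R (d * (d + 1) / 2) • ν) :=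
  ⟨h₁.smul _, ⟨h₂.left_rescaled, h₂.right_rescaled⟩, h₃.smul _,
    ⟨h₄.right_rescaled, h₄.left_rescaled⟩, h₅.smul _ _⟩

/-- Rescaling `(c,d)`-graded Frobenius data by
`μ' := (−1)^{c(c+1)/2} μ` and `ν' := (−1)^{d(d+1)/2} ν` produces data satisfying the
alternative (Cieliebak–Oancea) sign conventions: graded associativity, the unitality
relations `μ'∘(η⊗id) = id = (−1)^c μ'∘(id⊗η)`, graded coassociativity, the counitality
relations `(id⊗ε)∘ν' = id = (−1)^d (ε⊗id)∘ν'`, and the graded Frobenius relation. -/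
theorem graded_frobenius_sign_change
    (R : Type) [CommRing R] (c d : ℤ) (A : GradedModule R)
    (μ : GMap (A.tensor A) A) (η : GMap (gUnit R) A)
    (ν : GMap A (A.tensor A)) (ε : GMap A (gUnit R))
    (hμ : μ.deg = c) (hη : η.deg = -c) (hν : ν.deg = d) (hε : ε.deg = -d)
    (h₁ : relAssoc c μ) (h₂ : relUnit c μ η) (h₃ : relCoassoc d ν)
    (h₄ : relCounit d ν ε) (h₅ : relFrob c d μ ν) :
    relAssoc c (gsign R (c * (c + 1) / 2) • μ) ∧
    (((gsign R (c * (c + 1) / 2) • μ).comp (η.tmul (GMap.id A))).comp (lunitorInv A) =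
        GMap.id A ∧
      gsign R c • (((gsign R (c * (c + 1) / 2) • μ).comp
          ((GMap.id A).tmul η)).comp (runitorInv A)) = GMap.id A) ∧
    relCoassoc d (gsign R (d * (d + 1) / 2) • ν) ∧
    ((runitor A).comp (((GMap.id A).tmul ε).comp (gsign R (d * (d + 1) / 2) • ν)) =
        GMap.id A ∧
      gsign R d • ((lunitor A).comp
          ((ε.tmul (GMap.id A)).comp (gsign R (d * (d + 1) / 2) • ν))) = GMap.id A) ∧
    relFrob c d (gsign R (c * (c + 1) / 2) • μ) (gsign R (d * (d + 1) / 2) • ν) :=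
  graded_frobenius_sign_change_general R c d A μ η ν ε h₁ h₂ h₃ h₄ h₅
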